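/- Let A_1, A_2, …, A_n be n×n nonnegative matrices, each with strictly positive diagonal entries, such that for each k the directed graph with edge set {(i,j) : A_k(i,j) > 0} is strongly connected. Then the product A_1 A_2 ⋯ A_n is entrywise strictly positive. -/

import Mathlib

/-!
Track the set of positive entries of a row of the partial product `A₁ ⋯ Aₖ`. Multiplying on
the right by a nonnegative matrix with positive diagonal never loses a positive entry, and if the
support `S` of the row is neither empty nor everything, strong connectivity provides an edge
`k → l` with `k ∈ S` and `l ∉ S`, which makes entry `l` positive as well. So each factor enlarges
the support by at least one until it is full, and `card ι - 1` factors already suffice.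
-/

open Matrix Finset

theorem Relation.TransGen.exists_rel_mem_notMem {α : Type*} {r : α → α → Prop} {s : Set α}
    {a b : α} (h : Relation.TransGen r a b) (ha : a ∈ s) (hb : b ∉ s) :
    ∃ x ∈ s, ∃ y ∉ s, r x y := by
  induction h with
  | single hab => exact ⟨a, ha, _, hb, hab⟩
  | @tail c d _ hcd ih =>
    by_cases hc : c ∈ s
    · exact ⟨c, hc, d, hb, hcd⟩
    · exact ih hc

namespace Matrix

variable {ι R : Type*} [Fintype ι] [Semiring R] [PartialOrder R]

def IsNonneg (M : Matrix ι ι R) : Prop := ∀ i j, 0 ≤ M i j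

def IsStronglyConnected (M : Matrix ι ι R) : Prop :=
  ∀ i j, i ≠ j → Relation.TransGen (fun u v => 0 < M u v) i j

noncomputable def rowSupport (M : Matrix ι ι R) (i : ι) : Finset ι := by
  classical exact {j | 0 < M i j}

@[simp]
theorem mem_rowSupport {M : Matrix ι ι R} {i j : ι} : j ∈ rowSupport M i ↔ 0 < M i j := by
  classical simp [rowSupport]

variable [IsStrictOrderedRing R]

theorem IsNonneg.mul {M B : Matrix ι ι R} (hM : M.IsNonneg) (hB : B.IsNonneg) :
    (M * B).IsNonneg := fun i j =>
  Finset.sum_nonneg fun k _ => mul_nonneg (hM i k) (hB k j)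

theorem IsNonneg.list_prod [DecidableEq ι] {L : List (Matrix ι ι R)}
    (hL : ∀ B ∈ L, B.IsNonneg) : L.prod.IsNonneg :=
  L.prod_induction _ (fun _ _ => IsNonneg.mul)
    (fun i j => by by_cases h : i = j <;> simp [one_apply, h]) hL

theorem mul_apply_pos {M B : Matrix ι ι R} {i k j : ι} (hM : M.IsNonneg) (hB : B.IsNonneg)
    (hik : 0 < M i k) (hkj : 0 < B k j) : 0 < (M * B) i j :=
  Finset.sum_pos' (fun l _ => mul_nonneg (hM i l) (hB l j)) ⟨k, mem_univ k, mul_pos hik hkj⟩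

theorem rowSupport_subset_mul {M B : Matrix ι ι R} (hM : M.IsNonneg) (hB : B.IsNonneg)
    (hdiag : ∀ k, 0 < B k k) (i : ι) : rowSupport M i ⊆ rowSupport (M * B) i := fun j hj => by
  rw [mem_rowSupport] at hj ⊢
  exact mul_apply_pos hM hB hj (hdiag j)

theorem card_rowSupport_lt_mul [DecidableEq ι] {M B : Matrix ι ι R} (hM : M.IsNonneg)
    (hB : B.IsNonneg) (hdiag : ∀ k, 0 < B k k) (hconn : B.IsStronglyConnected) {i : ι}
    (hne : (rowSupport M i).Nonempty) (hfull : rowSupport M i ≠ univ) :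
    #(rowSupport M i) < #(rowSupport (M * B) i) := by
  obtain ⟨u, hu⟩ := hne
  obtain ⟨v, -, hv⟩ := Finset.exists_of_ssubset (ssubset_univ_iff.mpr hfull)
  have huv : u ≠ v := by rintro rfl; exact hv hu
  obtain ⟨k, hk, l, hl, hkl⟩ :=
    (hconn u v huv).exists_rel_mem_notMem (s := ↑(rowSupport M i)) hu hv
  have hl' : l ∈ rowSupport (M * B) i :=
    mem_rowSupport.mpr (mul_apply_pos hM hB (mem_rowSupport.mp hk) hkl)
  calc #(rowSupport M i) < #(insert l (rowSupport M i)) := card_lt_card (ssubset_insert hl)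
    _ ≤ #(rowSupport (M * B) i) :=
      card_le_card (insert_subset hl' (rowSupport_subset_mul hM hB hdiag i))

theorem min_le_card_rowSupport_list_prod [DecidableEq ι] (L : List (Matrix ι ι R))
    (hL : ∀ B ∈ L, B.IsNonneg ∧ (∀ k, 0 < B k k) ∧ B.IsStronglyConnected) (i : ι) :
    min (L.length + 1) (Fintype.card ι) ≤ #(rowSupport L.prod i) := by
  induction L using List.reverseRecOn with
  | nil =>
    have hi : i ∈ rowSupport (List.prod [] : Matrix ι ι R) i := by simp
    have := card_pos.mpr ⟨i, hi⟩
    simp only [List.length_nil]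
    omega
  | append_singleton L B ih =>
    obtain ⟨hBn, hBd, hBc⟩ := hL B (by simp)
    have hL' := fun C hC => hL C (List.mem_append_left [B] hC)
    have ih := ih hL'
    have hM := IsNonneg.list_prod fun C hC => (hL' C hC).1
    rw [List.prod_append, List.prod_singleton, List.length_append, List.length_singleton]
    by_cases hfull : rowSupport L.prod i = univ
    · have hfull' : rowSupport (L.prod * B) i = univ :=
        univ_subset_iff.mp (hfull ▸ rowSupport_subset_mul hM hBn hBd i)
      rw [hfull', card_univ]
      omega
    · have hcard : 0 < Fintype.card ι := Fintype.card_pos_iff.mpr ⟨i⟩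
      have hne : (rowSupport L.prod i).Nonempty := card_pos.mp (by omega)
      have := card_rowSupport_lt_mul hM hBn hBd hBc hne hfull
      omega

theorem list_prod_pos [DecidableEq ι] (L : List (Matrix ι ι R))
    (hL : ∀ B ∈ L, B.IsNonneg ∧ (∀ k, 0 < B k k) ∧ B.IsStronglyConnected)
    (hlen : Fintype.card ι ≤ L.length + 1) (i j : ι) : 0 < L.prod i j := by
  have hcard := min_le_card_rowSupport_list_prod L hL i
  rw [min_eq_right hlen] at hcard
  have hfull : rowSupport L.prod i = univ := eq_univ_of_card _ (le_antisymm (card_le_univ _) hcard)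
  exact mem_rowSupport.mp (hfull ▸ mem_univ j)

end Matrix

theorem product_strongly_connected_positive_general
    {n : ℕ}
    (A : Fin n → Matrix (Fin n) (Fin n) ℝ)
    (hnonneg : ∀ k i j, 0 ≤ A k i j)
    (hdiag : ∀ k i, 0 < A k i i)
    (hconn : ∀ k, ∀ i j : Fin n, i ≠ j → Relation.TransGen (fun u v => 0 < A k u v) i j) :
    ∀ i j, 0 < (((List.finRange n).map A).prod) i j := by
  refine list_prod_pos _ ?_ (by simp)
  simp only [List.mem_map, List.mem_finRange, true_and, forall_exists_index, forall_apply_eq_imp_iff]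
  exact fun k => ⟨hnonneg k, hdiag k, hconn k⟩

theorem product_strongly_connected_positive
    {n : ℕ} (hn : 0 < n)
    (A : Fin n → Matrix (Fin n) (Fin n) ℝ)
    (hnonneg : ∀ k i j, 0 ≤ A k i j)
    (hdiag : ∀ k i, 0 < A k i i)
    (hconn : ∀ k, ∀ i j : Fin n, i ≠ j → Relation.TransGen (fun u v => 0 < A k u v) i j) :
    ∀ i j, 0 < (((List.finRange n).map A).prod) i j :=
  product_strongly_connected_positive_general A hnonneg hdiag hconn
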